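/- Every finite chordal graph with at least one vertex has a simplicial vertex, i.e., a vertex whose neighborhood is a clique. -/

import Mathlib

/-- A simple graph is chordal if every cycle of length at least 4 has a chord. -/
def SimpleGraph.IsChordal {V : Type*} (G : SimpleGraph V) : Prop :=
  ∀ (v : V) (c : G.Walk v v), c.IsCycle → 4 ≤ c.length →
    ∃ u w : V, u ∈ c.support ∧ w ∈ c.support ∧ G.Adj u w ∧ s(u, w) ∉ c.edges

/-!
We prove the stronger statement that for every clique `K ≠ V` some simplicial vertex lies
outside `K`, by induction on the number of vertices. If `G` is complete there is nothing to do.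
Otherwise choose a non-universal vertex `x` with `K ⊆ N[x]`, a vertex `y ∉ N[x]`, and let `C` be
the component of `y` in `G - N[x]`. The neighbours of `x` that touch `C` form a clique `S`: two
non-adjacent ones, joined through `C` by a shortest path, would close up with `x` into a
chordless cycle of length at least 4. Induction applied to `G[C ∪ S]` and the clique `S` gives a
vertex of `C` that is simplicial in `G[C ∪ S]`; all its neighbours lie in `C ∪ S`, so it is
simplicial in `G`, and it avoids `K ⊆ N[x]`.
-/

namespace SimpleGraph

variable {V W : Type*} {G : SimpleGraph V} {H : SimpleGraph W}

namespace Walk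

theorem IsChordless.map {u v : W} {p : H.Walk u v} (hp : p.IsChordless) (f : H ↪g G) :
    (p.map f.toHom).IsChordless := by
  rw [isChordless_iff_forall_mem_edges] at hp ⊢
  intro a b ha hb hab
  simp only [support_map, List.mem_map] at ha hb
  obtain ⟨a, ha, rfl⟩ := ha
  obtain ⟨b, hb, rfl⟩ := hb
  rw [edges_map]
  exact List.mem_map_of_mem (hp ha hb (f.map_adj_iff.mp hab))

theorem exists_isSubwalk_of_mem_support {u v x y : V} (p : G.Walk u v) (hx : x ∈ p.support)
    (hy : y ∈ p.support) :
    (∃ q : G.Walk x y, q.IsSubwalk p) ∨ ∃ q : G.Walk y x, q.IsSubwalk p := by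
  classical
  rw [← p.take_spec hx, mem_support_append_iff] at hy
  rcases hy with hy | hy
  · exact .inr ⟨_, ((p.takeUntil x hx).isSubwalk_dropUntil hy).trans (p.isSubwalk_takeUntil hx)⟩
  · exact .inl ⟨_, ((p.dropUntil x hx).isSubwalk_takeUntil hy).trans (p.isSubwalk_dropUntil hx)⟩

theorem isChordless_of_length_eq_dist {u v : V} {p : G.Walk u v}
    (hp : p.length = G.dist u v) : p.IsChordless := by
  have hsubwalk_edge : ∀ {x y : V}, G.Adj x y → ∀ q : G.Walk x y, q.IsSubwalk p → s(x, y) ∈ p.edges := by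
    intro x y hxy q hq
    have hq1 : q.length = 1 := by
      rw [length_eq_dist_of_subwalk hp hq, dist_eq_one_iff_adj.mpr hxy]
    refine hq.edges_subset ?_
    cases q with
    | nil => simp at hq1
    | cons h q' => cases q' with
      | nil => simp
      | cons _ _ => simp at hq1
  rw [isChordless_iff_forall_mem_edges]
  intro x y hx hy hxy
  rcases p.exists_isSubwalk_of_mem_support hx hy with ⟨q, hq⟩ | ⟨q, hq⟩
  · exact hsubwalk_edge hxy q hq
  · exact Sym2.eq_swap ▸ hsubwalk_edge hxy.symm q hq

theorem exists_isPath_isChordless_of_support_subset {u v : V} {A : Set V} (p : G.Walk u v)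
    (hp : ∀ z ∈ p.support, z ∈ A) :
    ∃ q : G.Walk u v, q.IsPath ∧ q.IsChordless ∧ ∀ z ∈ q.support, z ∈ A := by
  obtain ⟨q, hq, hql⟩ := (p.induce A hp).reachable.exists_path_of_dist
  refine ⟨q.map (Embedding.induce A).toHom, hq.map Subtype.val_injective,
    (isChordless_of_length_eq_dist hql).map _, ?_⟩
  intro z hz
  have hz' : z ∈ (q.map (Embedding.induce A).toHom).support := hz
  rw [support_map, List.mem_map] at hz'
  obtain ⟨z, -, rfl⟩ := hz'
  exact z.2

end Walk

def reachableWithin (G : SimpleGraph V) (D : Set V) (y : V) : Set V :=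
  {z | ∃ p : G.Walk y z, ∀ w ∈ p.support, w ∈ D}

section reachableWithin

variable {D : Set V} {y : V}

theorem reachableWithin_subset : G.reachableWithin D y ⊆ D :=
  fun _ ⟨p, hp⟩ => hp _ p.end_mem_support

theorem mem_reachableWithin_self (hy : y ∈ D) : y ∈ G.reachableWithin D y :=
  ⟨.nil, by simpa⟩

theorem mem_reachableWithin_of_adj {c z : V} (hc : c ∈ G.reachableWithin D y) (hz : z ∈ D)
    (hcz : G.Adj c z) : z ∈ G.reachableWithin D y := by
  obtain ⟨p, hp⟩ := hc
  refine ⟨p.concat hcz, fun w hw => ?_⟩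
  rw [Walk.support_concat, List.mem_append, List.mem_singleton] at hw
  exact hw.elim (hp w) fun h => h ▸ hz

theorem exists_walk_of_mem_reachableWithin {c c' : V} (hc : c ∈ G.reachableWithin D y)
    (hc' : c' ∈ G.reachableWithin D y) :
    ∃ p : G.Walk c c', ∀ w ∈ p.support, w ∈ G.reachableWithin D y := by
  classical
  have h_on_walk : ∀ {c} (p : G.Walk y c), (∀ w ∈ p.support, w ∈ D) →
      ∀ w ∈ p.support, w ∈ G.reachableWithin D y := fun p hp w hw =>
    ⟨p.takeUntil w hw, fun z hz => hp z (p.support_takeUntil_subset_support hw hz)⟩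
  obtain ⟨p, hp⟩ := hc
  obtain ⟨p', hp'⟩ := hc'
  refine ⟨p.reverse.append p', fun w hw => ?_⟩
  rw [Walk.mem_support_append_iff, Walk.support_reverse, List.mem_reverse] at hw
  exact hw.elim (h_on_walk p hp w) (h_on_walk p' hp' w)

end reachableWithin

theorem IsClique.exists_not_adj_forall_mem_eq_or_adj {K : Set V} (hK : G.IsClique K)
    (h : ∃ u w, u ≠ w ∧ ¬G.Adj u w) :
    ∃ x y, x ≠ y ∧ ¬G.Adj x y ∧ ∀ k ∈ K, k = x ∨ G.Adj x k := by
  by_cases hK_nonuniversal : ∃ k ∈ K, ∃ y, k ≠ y ∧ ¬G.Adj k y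
  · obtain ⟨k, hk, y, hky, hnky⟩ := hK_nonuniversal
    refine ⟨k, y, hky, hnky, fun k' hk' => ?_⟩
    rcases eq_or_ne k' k with rfl | hne
    · exact .inl rfl
    · exact .inr (hK hk hk' hne.symm)
  · push Not at hK_nonuniversal
    obtain ⟨u, w, huw, hnuw⟩ := h
    refine ⟨u, w, huw, hnuw, fun k hk => ?_⟩
    rcases eq_or_ne k u with rfl | hne
    · exact .inl rfl
    · exact .inr (hK_nonuniversal k hk u hne).symm

theorem isClique_neighborSet_of_induce {s : Set V} {v : s} (hv : G.neighborSet v ⊆ s)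
    (h : (G.induce s).IsClique ((G.induce s).neighborSet v)) :
    G.IsClique (G.neighborSet v) :=
  fun a ha b hb hab =>
    h (show (G.induce s).Adj v ⟨a, hv ha⟩ from ha) (show (G.induce s).Adj v ⟨b, hv hb⟩ from hb)
      (by simpa using hab)

theorem IsChordal.comap (hG : G.IsChordal) (f : H ↪g G) : H.IsChordal := by
  intro v c hc hlen
  obtain ⟨_, _, hu, hw, huw, hnot⟩ :=
    hG _ (c.map f.toHom) (hc.map f.injective) (by rwa [Walk.length_map])
  simp only [Walk.support_map, List.mem_map] at hu hw
  obtain ⟨a, ha, rfl⟩ := hu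
  obtain ⟨b, hb, rfl⟩ := hw
  refine ⟨a, b, ha, hb, f.map_adj_iff.mp huw, fun hab => hnot ?_⟩
  rw [Walk.edges_map]
  exact List.mem_map_of_mem hab

theorem IsChordal.induce (hG : G.IsChordal) (s : Set V) : (G.induce s).IsChordal :=
  hG.comap (Embedding.induce s)

theorem IsChordal.length_lt_two_of_isChordless (hG : G.IsChordal) {x s s' : V}
    {q : G.Walk s s'} (hq : q.IsPath) (hqc : q.IsChordless) (hxq : x ∉ q.support)
    (hxs : G.Adj x s) (hxs' : G.Adj x s') (hx_adj : ∀ z ∈ q.support, G.Adj x z → z = s ∨ z = s') :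
    q.length < 2 := by
  by_contra! hlen
  let cyc : G.Walk s' s' := .cons hxs'.symm (.cons hxs q)
  have hcyc : cyc.IsCycle := by
    refine (Walk.cons_isCycle_iff _ _).mpr ⟨hq.cons hxq, ?_⟩
    rw [Walk.edges_cons, List.mem_cons, not_or]
    refine ⟨fun h => ?_, fun h => hxq (q.snd_mem_support_of_mem_edges h)⟩
    have : s = s' := by grind
    subst this
    have := (Walk.isPath_iff_nil.mp hq).length_eq_zero
    omega
  obtain ⟨u, w, hu, hw, huw, hnot⟩ := hG s' cyc hcyc (by simp [cyc]; omega)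
  have hsupp : ∀ z ∈ cyc.support, z = x ∨ z ∈ q.support := by
    intro z hz
    simp only [cyc, Walk.support_cons, List.mem_cons] at hz
    rcases hz with rfl | h
    · exact .inr q.end_mem_support
    · exact h
  have hedges : cyc.edges = s(s', x) :: s(x, s) :: q.edges := rfl
  have hx_edge : ∀ z ∈ q.support, G.Adj x z → s(x, z) ∈ cyc.edges := by
    intro z hz hxz
    rcases hx_adj z hz hxz with rfl | rfl <;> simp [hedges, Sym2.eq_swap]
  apply hnot
  rcases hsupp u hu with rfl | huq <;> rcases hsupp w hw with rfl | hwq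
  · exact absurd huw (G.loopless.irrefl _)
  · exact hx_edge w hwq huw
  · exact Sym2.eq_swap ▸ hx_edge u huq huw.symm
  · exact hedges ▸ List.mem_cons_of_mem _ (List.mem_cons_of_mem _ (hqc.mem_edges huq hwq huw))

theorem IsChordal.isClique_neighborSet_inter (hG : G.IsChordal) {x : V} {C : Set V}
    (hC : ∀ c ∈ C, ∀ c' ∈ C, ∃ p : G.Walk c c', ∀ z ∈ p.support, z ∈ C)
    (hxC : ∀ c ∈ C, c ≠ x ∧ ¬G.Adj x c) :
    G.IsClique (G.neighborSet x ∩ {s | ∃ c ∈ C, G.Adj s c}) := by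
  intro s hs s' hs' hne
  obtain ⟨hxs, c, hc, hsc⟩ : G.Adj x s ∧ ∃ c ∈ C, G.Adj s c := hs
  obtain ⟨hxs', c', hc', hs'c'⟩ : G.Adj x s' ∧ ∃ c ∈ C, G.Adj s' c := hs'
  by_contra hnadj
  obtain ⟨p, hpC⟩ := hC c hc c' hc'
  obtain ⟨q, hq, hqc, hqA⟩ := Walk.exists_isPath_isChordless_of_support_subset
    (A := {z | z ∈ C ∨ z = s ∨ z = s'}) (.cons hsc (p.concat hs'c'.symm)) (by
      intro z hz
      simp only [Walk.support_cons, Walk.support_concat, List.mem_cons, List.mem_append] at hz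
      grind)
  have hxq : x ∉ q.support := by
    intro hx
    rcases hqA x hx with hxC' | rfl | rfl
    · exact (hxC x hxC').1 rfl
    · exact G.loopless.irrefl _ hxs
    · exact G.loopless.irrefl _ hxs'
  have hlen := hG.length_lt_two_of_isChordless hq hqc hxq hxs hxs' fun z hz hxz =>
    (hqA z hz).resolve_left fun hzC => (hxC z hzC).2 hxz
  interval_cases hql : q.length
  · exact hne (Walk.eq_of_length_eq_zero hql)
  · exact hnadj (Walk.adj_of_length_eq_one hql)

theorem IsChordal.exists_notMem_isClique_neighborSet [Finite V] (hG : G.IsChordal)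
    {K : Set V} (hK : G.IsClique K) (hKV : K ≠ Set.univ) :
    ∃ v ∉ K, G.IsClique (G.neighborSet v) := by
  induction h : Nat.card V using Nat.strong_induction_on generalizing V with
  | _ n ih =>
  obtain ⟨v, hv⟩ := (Set.ne_univ_iff_exists_notMem K).mp hKV
  by_cases hcomplete : ∀ u w : V, u ≠ w → G.Adj u w
  · exact ⟨v, hv, fun a _ b _ hab => hcomplete a b hab⟩
  push Not at hcomplete
  obtain ⟨x, y, hxy, hnxy, hKx⟩ := hK.exists_not_adj_forall_mem_eq_or_adj hcomplete
  set C := G.reachableWithin {z | z ≠ x ∧ ¬G.Adj x z} y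
  set S := G.neighborSet x ∩ {s | ∃ c ∈ C, G.Adj s c}
  have hCx : ∀ c ∈ C, c ≠ x ∧ ¬G.Adj x c := fun c hc =>
    (reachableWithin_subset hc : c ∈ {z | z ≠ x ∧ ¬G.Adj x z})
  have hS : G.IsClique S :=
    hG.isClique_neighborSet_inter (fun _ hc _ hc' => exists_walk_of_mem_reachableWithin hc hc')
      hCx
  have hyC : y ∈ C := mem_reachableWithin_self ⟨hxy.symm, hnxy⟩
  have hxCS : x ∉ C ∪ S := by
    rintro (hxC | ⟨hxx, -⟩)
    exacts [(hCx x hxC).1 rfl, G.loopless.irrefl x hxx]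
  have hnbhd : ∀ c ∈ C, G.neighborSet c ⊆ C ∪ S := by
    intro c hc z (hcz : G.Adj c z)
    by_cases hzD : z ≠ x ∧ ¬G.Adj x z
    · exact .inl (mem_reachableWithin_of_adj hc hzD hcz)
    · refine .inr ⟨?_, c, hc, hcz.symm⟩
      push Not at hzD
      exact hzD fun hzx => (hCx c hc).2 (hzx ▸ hcz.symm)
  obtain ⟨⟨v, hvCS⟩, hvS, hv⟩ := ih _ (h ▸ Finite.card_subtype_lt hxCS) (hG.induce (C ∪ S))
    (K := {v | v.1 ∈ S}) (fun a ha b hb hab => hS ha hb (Subtype.coe_ne_coe.mpr hab))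
    ((Set.ne_univ_iff_exists_notMem _).mpr ⟨⟨y, .inl hyC⟩, fun hyS => hnxy hyS.1⟩) rfl
  have hvC : v ∈ C := hvCS.resolve_right hvS
  refine ⟨v, fun hvK => ?_, isClique_neighborSet_of_induce (hnbhd v hvC) hv⟩
  rcases hKx v hvK with rfl | hxv
  exacts [(hCx _ hvC).1 rfl, (hCx v hvC).2 hxv]

end SimpleGraph

/-- Every finite chordal graph with at least one vertex has a simplicial vertex:
a vertex whose neighborhood is a clique. -/
theorem exists_simplicial_vertex_of_isChordal
    {V : Type*} [Fintype V] [Nonempty V] (G : SimpleGraph V) (hG : G.IsChordal) :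
    ∃ v : V, G.IsClique (G.neighborSet v) := by
  obtain ⟨v, -, hv⟩ := hG.exists_notMem_isClique_neighborSet (K := ∅) SimpleGraph.isClique_empty
    Set.empty_ne_univ
  exact ⟨v, hv⟩
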